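/- Let S be a fundamental Boolean inverse ∧-monoid and let a ∈ S. (1) If af = fa for all idempotents f ≤ \overline{φ(a)}, then a is an idempotent. (2) If a⁻¹a = aa⁻¹ and af = fa for all idempotents f ≤ σ(a), then a is an idempotent. -/

import Mathlib

universe u

/-- An inverse monoid with zero: every element `a` has a unique generalized
inverse `a⁻¹`, and `0` is an absorbing element. -/
class InverseMonoidWithZero (S : Type u) extends Monoid S, Zero S, Inv S where
  zero_mul' : ∀ a : S, 0 * a = 0
  mul_zero' : ∀ a : S, a * 0 = 0
  mul_inv_mul : ∀ a : S, a * a⁻¹ * a = a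
  inv_mul_inv : ∀ a : S, a⁻¹ * a * a⁻¹ = a⁻¹
  inv_unique : ∀ a b : S, a * b * a = a → b * a * b = b → b = a⁻¹

section BasicDefs

variable {S : Type u}

/-- The natural partial order: `a ≤ b` iff `a = e * b` for some idempotent `e`. -/
def nle [InverseMonoidWithZero S] (a b : S) : Prop :=
  ∃ e : S, e * e = e ∧ a = e * b

/-- `a` and `b` are compatible if `a * b⁻¹` and `a⁻¹ * b` are idempotents. -/
def Compat [InverseMonoidWithZero S] (a b : S) : Prop :=
  (a * b⁻¹) * (a * b⁻¹) = a * b⁻¹ ∧ (a⁻¹ * b) * (a⁻¹ * b) = a⁻¹ * b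

/-- `a` and `b` are orthogonal if `a * b⁻¹ = 0` and `a⁻¹ * b = 0`. -/
def Orth [InverseMonoidWithZero S] (a b : S) : Prop :=
  a * b⁻¹ = 0 ∧ a⁻¹ * b = 0

end BasicDefs

/-- A distributive inverse monoid: every compatible pair has a join (for the
natural partial order), recorded by `sup`, and multiplication distributes over
these binary joins. -/
class DistributiveInverseMonoid (S : Type u) extends InverseMonoidWithZero S where
  sup : S → S → S
  le_sup_left : ∀ a b : S, Compat a b → nle a (sup a b)
  le_sup_right : ∀ a b : S, Compat a b → nle b (sup a b)
  sup_le : ∀ a b c : S, Compat a b → nle a c → nle b c → nle (sup a b) c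
  mul_sup : ∀ a b c : S, Compat a b → c * sup a b = sup (c * a) (c * b)
  sup_mul : ∀ a b c : S, Compat a b → sup a b * c = sup (a * c) (b * c)

/-- A Boolean inverse monoid: a distributive inverse monoid whose idempotents
form a Boolean algebra under the natural partial order; `compl` records the
complementation on idempotents. -/
class BooleanInverseMonoid (S : Type u) extends DistributiveInverseMonoid S where
  compl : S → S
  compl_idem : ∀ e : S, e * e = e → compl e * compl e = compl e
  mul_compl : ∀ e : S, e * e = e → e * compl e = 0
  sup_compl : ∀ e : S, e * e = e → sup e (compl e) = 1

/-- A Boolean inverse ∧-monoid: a Boolean inverse monoid in which every pair of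
elements has a meet with respect to the natural partial order. -/
class BooleanInverseMeetMonoid (S : Type u) extends BooleanInverseMonoid S where
  inf : S → S → S
  inf_le_left : ∀ a b : S, nle (inf a b) a
  inf_le_right : ∀ a b : S, nle (inf a b) b
  le_inf : ∀ a b c : S, nle c a → nle c b → nle c (inf a b)

section MoreDefs

variable {S : Type u}

/-- The join of a compatible pair. -/
def bsup [DistributiveInverseMonoid S] (a b : S) : S := DistributiveInverseMonoid.sup a b

/-- Complementation in the Boolean algebra of idempotents. -/
def bcompl [BooleanInverseMonoid S] (e : S) : S := BooleanInverseMonoid.compl e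

/-- The binary meet. -/
def binf [BooleanInverseMeetMonoid S] (a b : S) : S := BooleanInverseMeetMonoid.inf a b

/-- The fixed-point operator `φ(s) = s ∧ 1`. -/
def phi [BooleanInverseMeetMonoid S] (s : S) : S := binf s 1

/-- The support operator `σ(s) = \overline{φ(s)} ⋅ s⁻¹ s`. -/
def sigma [BooleanInverseMeetMonoid S] (s : S) : S := bcompl (phi s) * (s⁻¹ * s)

/-- An infinitesimal is a non-zero element that squares to zero. -/
def Infinitesimal [InverseMonoidWithZero S] (a : S) : Prop := a ≠ 0 ∧ a * a = 0

/-- A (two-sided) ideal. -/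
def IsMIdeal [InverseMonoidWithZero S] (I : Set S) : Prop :=
  I.Nonempty ∧ ∀ a ∈ I, ∀ s : S, s * a ∈ I ∧ a * s ∈ I

/-- A ∨-ideal: an ideal closed under joins of compatible pairs. -/
def IsVIdeal [DistributiveInverseMonoid S] (I : Set S) : Prop :=
  IsMIdeal I ∧ ∀ a ∈ I, ∀ b ∈ I, Compat a b → bsup a b ∈ I

end MoreDefs

/-- 0-simplifying: the only ∨-ideals are `{0}` and `S`. -/
def ZeroSimplifying (S : Type u) [DistributiveInverseMonoid S] : Prop :=
  ∀ I : Set S, IsVIdeal I → I = {0} ∨ I = Set.univ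

/-- 0-simple: non-trivial and the only ideals are `{0}` and `S`. -/
def ZeroSimple (S : Type u) [InverseMonoidWithZero S] : Prop :=
  (∃ s : S, s ≠ 0) ∧ ∀ I : Set S, IsMIdeal I → I = {0} ∨ I = Set.univ

/-- Fundamental: every element commuting with all idempotents is an idempotent. -/
def Fundamental (S : Type u) [InverseMonoidWithZero S] : Prop :=
  ∀ a : S, (∀ e : S, e * e = e → a * e = e * a) → a * a = a

/-- The Boolean algebra of idempotents is atomless. -/
def IdemAtomless (S : Type u) [InverseMonoidWithZero S] : Prop :=
  ∀ e : S, e * e = e → e ≠ 0 → ∃ f : S, f * f = f ∧ f ≠ 0 ∧ nle f e ∧ f ≠ e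

section Filters

variable {S : Type u}

/-- A filter in a Boolean inverse ∧-monoid: a nonempty subset closed under
binary meets and upward closed in the natural partial order. -/
def IsMFilter [BooleanInverseMeetMonoid S] (A : Set S) : Prop :=
  A.Nonempty ∧ (∀ a ∈ A, ∀ b ∈ A, binf a b ∈ A) ∧ ∀ a ∈ A, ∀ b : S, nle a b → b ∈ A

/-- An ultrafilter: a maximal proper filter. -/
def IsMUltrafilter [BooleanInverseMeetMonoid S] (A : Set S) : Prop :=
  IsMFilter A ∧ (0 : S) ∉ A ∧ ∀ B : Set S, IsMFilter B → (0 : S) ∉ B → A ⊆ B → A = B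

/-- A filter of the Boolean algebra of idempotents (meet of idempotents is
their product). -/
def IsIdemFilter [InverseMonoidWithZero S] (F : Set S) : Prop :=
  F.Nonempty ∧ (∀ e ∈ F, e * e = e) ∧ (∀ e ∈ F, ∀ f ∈ F, e * f ∈ F) ∧
    ∀ e ∈ F, ∀ f : S, f * f = f → nle e f → f ∈ F

/-- An ultrafilter of the Boolean algebra of idempotents. -/
def IsIdemUltrafilter [InverseMonoidWithZero S] (F : Set S) : Prop :=
  IsIdemFilter F ∧ (0 : S) ∉ F ∧
    ∀ G : Set S, IsIdemFilter G → (0 : S) ∉ G → F ⊆ G → F = G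

end Filters

section PencilDefs

variable {S : Type u}

/-- `Preceq e f`: there is a pencil from `e` to `f`, i.e. finitely many
elements `x₁, …, xₘ` with `r(xᵢ) ≤ f` for all `i` and `e = ⋁ d(xᵢ)`
(a least upper bound for the natural partial order). -/
def Preceq [DistributiveInverseMonoid S] (e f : S) : Prop :=
  ∃ l : List S, l ≠ [] ∧ (∀ x ∈ l, nle (x * x⁻¹) f) ∧
    (∀ x ∈ l, nle (x⁻¹ * x) e) ∧ ∀ c : S, (∀ x ∈ l, nle (x⁻¹ * x) c) → nle e c

/-- Piecewise factorizable: every element is a finite join of elements each of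
which lies beneath a unit. -/
def PiecewiseFactorizable (S : Type u) [DistributiveInverseMonoid S] : Prop :=
  ∀ s : S, ∃ l : List S, l ≠ [] ∧ (∀ x ∈ l, ∃ g : S, IsUnit g ∧ nle x g) ∧
    (∀ x ∈ l, nle x s) ∧ ∀ c : S, (∀ x ∈ l, nle x c) → nle s c

/-- A properly infinite idempotent. -/
def ProperlyInfinite [DistributiveInverseMonoid S] (e : S) : Prop :=
  ∃ x y : S, x⁻¹ * x = e ∧ y⁻¹ * y = e ∧ Orth (x * x⁻¹) (y * y⁻¹) ∧
    nle (bsup (x * x⁻¹) (y * y⁻¹)) e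

end PencilDefs

/-- Purely infinite: every non-zero idempotent is properly infinite. -/
def PurelyInfinite (S : Type u) [DistributiveInverseMonoid S] : Prop :=
  ∀ e : S, e * e = e → e ≠ 0 → ProperlyInfinite e

/-! An idempotent below `a` commutes with `a`, and every idempotent below `φ(a)` is below `a`.
Each idempotent `f` is the join `f u ∨ f ū` for any idempotent `u`, and multiplication
distributes over such joins, so `a` commutes with `f` as soon as it commutes with both pieces.
Splitting along `u = φ(a)` gives (1). For (2), split first along `u = a⁻¹a`: when `a⁻¹a = aa⁻¹`,
every idempotent below the complement of `a⁻¹a` annihilates `a` on both sides, while the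
idempotents below `a⁻¹a` split along `φ(a)` into pieces below `a` and pieces below `σ(a)`.
In both cases `a` commutes with all idempotents, hence is one since `S` is fundamental. -/

namespace InverseMonoidWithZero

variable {S : Type u} [InverseMonoidWithZero S]

theorem inv_inv (a : S) : a⁻¹⁻¹ = a :=
  (inv_unique a⁻¹ a (inv_mul_inv a) (mul_inv_mul a)).symm

theorem inv_eq_self_of_isIdempotentElem {e : S} (he : IsIdempotentElem e) : e⁻¹ = e :=
  (inv_unique e e (by rw [he.eq, he.eq]) (by rw [he.eq, he.eq])).symm

theorem isIdempotentElem_mul_inv (a : S) : IsIdempotentElem (a * a⁻¹) := by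
  rw [IsIdempotentElem, ← mul_assoc, mul_inv_mul]

theorem isIdempotentElem_inv_mul (a : S) : IsIdempotentElem (a⁻¹ * a) := by
  rw [IsIdempotentElem, ← mul_assoc, inv_mul_inv]

theorem isIdempotentElem_mul {e f : S} (he : IsIdempotentElem e) (hf : IsIdempotentElem f) :
    IsIdempotentElem (e * f) := by
  set x := (e * f)⁻¹ with hx
  have hxefx : ∀ y, x * (e * (f * (x * y))) = x * y := fun y => by
    simpa only [mul_assoc] using congrArg (· * y) (inv_mul_inv (e * f))
  -- `f x e` is a second inverse of `e f`, hence equal to `x`.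
  have hfxe : f * x * e = x := by
    refine inv_unique (e * f) (f * x * e) ?_ ?_
    · simpa only [mul_assoc, he.mul_self_mul, hf.mul_self_mul] using mul_inv_mul (e * f)
    · simp only [mul_assoc, he.mul_self_mul, hf.mul_self_mul, hxefx]
  have hxx : IsIdempotentElem x := by
    calc x * x = f * (x * (e * (f * (x * e)))) := by
          conv_lhs => rw [← hfxe]
          simp only [mul_assoc]
      _ = x := by rw [hxefx, ← mul_assoc, hfxe]
  rw [← inv_inv (e * f), ← hx, inv_eq_self_of_isIdempotentElem hxx]
  exact hxx

theorem commute_of_isIdempotentElem {e f : S} (he : IsIdempotentElem e)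
    (hf : IsIdempotentElem f) : Commute e f := by
  have hef := isIdempotentElem_mul he hf
  have hfe := isIdempotentElem_mul hf he
  have hinv : f * e = (e * f)⁻¹ := by
    refine inv_unique (e * f) (f * e) ?_ ?_
    · simpa only [mul_assoc, he.mul_self_mul, hf.mul_self_mul] using hef.eq
    · simpa only [mul_assoc, he.mul_self_mul, hf.mul_self_mul] using hfe.eq
  rw [Commute, SemiconjBy, hinv, inv_eq_self_of_isIdempotentElem hef]

theorem mul_inv_rev (a b : S) : (a * b)⁻¹ = b⁻¹ * a⁻¹ := by
  have hcomm : Commute (b * b⁻¹) (a⁻¹ * a) :=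
    commute_of_isIdempotentElem (isIdempotentElem_mul_inv b) (isIdempotentElem_inv_mul a)
  refine (inv_unique (a * b) (b⁻¹ * a⁻¹) ?_ ?_).symm
  · calc a * b * (b⁻¹ * a⁻¹) * (a * b) = a * ((b * b⁻¹) * (a⁻¹ * a)) * b := by
          simp only [mul_assoc]
      _ = (a * a⁻¹ * a) * (b * b⁻¹ * b) := by rw [hcomm.eq]; simp only [mul_assoc]
      _ = a * b := by rw [mul_inv_mul, mul_inv_mul]
  · calc b⁻¹ * a⁻¹ * (a * b) * (b⁻¹ * a⁻¹) = b⁻¹ * ((a⁻¹ * a) * (b * b⁻¹)) * a⁻¹ := by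
          simp only [mul_assoc]
      _ = (b⁻¹ * b * b⁻¹) * (a⁻¹ * a * a⁻¹) := by rw [← hcomm.eq]; simp only [mul_assoc]
      _ = b⁻¹ * a⁻¹ := by rw [inv_mul_inv, inv_mul_inv]

theorem compat_of_isIdempotentElem {e f : S} (he : IsIdempotentElem e)
    (hf : IsIdempotentElem f) : Compat e f := by
  rw [Compat, inv_eq_self_of_isIdempotentElem he, inv_eq_self_of_isIdempotentElem hf]
  exact ⟨isIdempotentElem_mul he hf, isIdempotentElem_mul he hf⟩

theorem nle_trans {a b c : S} (hab : nle a b) (hbc : nle b c) : nle a c := by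
  obtain ⟨g, hg, rfl⟩ := hab
  obtain ⟨h, hh, rfl⟩ := hbc
  exact ⟨g * h, isIdempotentElem_mul hg hh, (mul_assoc g h c).symm⟩

theorem mul_eq_of_nle {s e : S} (he : IsIdempotentElem e) (h : nle s e) : s * e = s := by
  obtain ⟨g, -, rfl⟩ := h
  rw [mul_assoc, he.eq]

theorem mul_nle_left {e f : S} (he : IsIdempotentElem e) (hf : IsIdempotentElem f) :
    nle (e * f) e :=
  ⟨f, hf, (commute_of_isIdempotentElem he hf).eq⟩

theorem commute_of_nle {a f : S} (hf : IsIdempotentElem f) (h : nle f a) : Commute a f := by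
  obtain ⟨g, hg : IsIdempotentElem g, hfa⟩ := h
  have hcomm : Commute g (a * a⁻¹) := commute_of_isIdempotentElem hg (isIdempotentElem_mul_inv a)
  have hfinv : f = a⁻¹ * g := by
    rw [← inv_eq_self_of_isIdempotentElem hf, hfa, mul_inv_rev, inv_eq_self_of_isIdempotentElem hg]
  -- `f = f f` with one factor written `g a` and the other `a⁻¹ g`; `g` commutes with `a a⁻¹`.
  have hright : f * a = f := by
    calc f * a = g * a * (a⁻¹ * g) * a := by rw [← hfa, ← hfinv, hf.eq]
      _ = g * (a * a⁻¹) * g * a := by simp only [mul_assoc]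
      _ = g * g * (a * a⁻¹) * a := by
          rw [mul_assoc g (a * a⁻¹) g, ← hcomm.eq, ← mul_assoc g g]
      _ = f := by rw [hg.eq, mul_assoc, mul_inv_mul, hfa]
  have hleft : a * f = f := by
    calc a * f = a * (a⁻¹ * g * (g * a)) := by rw [← hfa, ← hfinv, hf.eq]
      _ = a * a⁻¹ * (g * g) * a := by simp only [mul_assoc]
      _ = g * (a * a⁻¹) * a := by rw [hg.eq, ← hcomm.eq]
      _ = f := by rw [mul_assoc, mul_inv_mul, hfa]
  rw [Commute, SemiconjBy, hleft, hright]

end InverseMonoidWithZero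

open InverseMonoidWithZero

section CommutesBelow

variable {S : Type u}

def CommutesBelow [InverseMonoidWithZero S] (a e : S) : Prop :=
  ∀ f : S, IsIdempotentElem f → nle f e → Commute a f

theorem commutesBelow_self [InverseMonoidWithZero S] (a : S) : CommutesBelow a a :=
  fun _ hf hfa => commute_of_nle hf hfa

theorem CommutesBelow.mono [InverseMonoidWithZero S] {a e e' : S} (h : CommutesBelow a e)
    (hle : nle e' e) : CommutesBelow a e' :=
  fun f hf hfe' => h f hf (nle_trans hfe' hle)

theorem Fundamental.mul_self_of_commutesBelow_one [InverseMonoidWithZero S]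
    (hS : Fundamental S) {a : S} (h : CommutesBelow a 1) : a * a = a :=
  hS a fun e he => h e he ⟨e, he, (mul_one e).symm⟩

theorem commute_bsup [DistributiveInverseMonoid S] {a x y : S} (hc : Compat x y)
    (hx : Commute a x) (hy : Commute a y) : Commute a (bsup x y) := by
  rw [Commute, SemiconjBy, bsup, DistributiveInverseMonoid.mul_sup _ _ _ hc, hx.eq, hy.eq,
    DistributiveInverseMonoid.sup_mul _ _ _ hc]

variable [BooleanInverseMonoid S]

theorem isIdempotentElem_bcompl {e : S} (he : IsIdempotentElem e) :
    IsIdempotentElem (bcompl e) :=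
  BooleanInverseMonoid.compl_idem e he

theorem mul_bcompl {e : S} (he : IsIdempotentElem e) : e * bcompl e = 0 :=
  BooleanInverseMonoid.mul_compl e he

theorem eq_bsup_mul_mul_bcompl {u : S} (hu : IsIdempotentElem u) (f : S) :
    f = bsup (f * u) (f * bcompl u) := by
  rw [bsup, ← DistributiveInverseMonoid.mul_sup _ _ _
    (compat_of_isIdempotentElem hu (isIdempotentElem_bcompl hu)), bcompl,
    BooleanInverseMonoid.sup_compl u hu, mul_one]

theorem mul_nle_mul_of_nle {e f u : S} (he : IsIdempotentElem e) (hf : IsIdempotentElem f)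
    (hu : IsIdempotentElem u) (hfe : nle f e) : nle (f * u) (u * e) :=
  ⟨f, hf, by rw [← (commute_of_isIdempotentElem he hu).eq, ← mul_assoc, mul_eq_of_nle he hfe]⟩

theorem commutesBelow_of_split {a e u : S} (he : IsIdempotentElem e) (hu : IsIdempotentElem u)
    (h : CommutesBelow a (u * e)) (h' : CommutesBelow a (bcompl u * e)) :
    CommutesBelow a e := by
  intro f hf hfe
  have hu' := isIdempotentElem_bcompl hu
  rw [eq_bsup_mul_mul_bcompl hu f]
  exact commute_bsup
    (compat_of_isIdempotentElem (isIdempotentElem_mul hf hu) (isIdempotentElem_mul hf hu'))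
    (h _ (isIdempotentElem_mul hf hu) (mul_nle_mul_of_nle he hf hu hfe))
    (h' _ (isIdempotentElem_mul hf hu') (mul_nle_mul_of_nle he hf hu' hfe))

theorem commutesBelow_one_of_split {a u : S} (hu : IsIdempotentElem u)
    (h : CommutesBelow a u) (h' : CommutesBelow a (bcompl u)) : CommutesBelow a 1 :=
  commutesBelow_of_split IsIdempotentElem.one hu (by rwa [mul_one]) (by rwa [mul_one])

-- Both products vanish: `f` is orthogonal to `a⁻¹a = aa⁻¹`, which fixes `a` on either side.
theorem commutesBelow_bcompl_inv_mul {a : S} (hnormal : a⁻¹ * a = a * a⁻¹) :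
    CommutesBelow a (bcompl (a⁻¹ * a)) := by
  intro f hf hfd
  have hd := isIdempotentElem_inv_mul a
  have hcomm : Commute (a⁻¹ * a) f := commute_of_isIdempotentElem hd hf
  have hdf : (a⁻¹ * a) * f = 0 := by
    rw [← mul_eq_of_nle (isIdempotentElem_bcompl hd) hfd, ← mul_assoc, hcomm.eq, mul_assoc,
      mul_bcompl hd, mul_zero']
  have hleft : a * f = 0 := by
    calc a * f = a * ((a⁻¹ * a) * f) := by rw [← mul_assoc, ← mul_assoc, mul_inv_mul]
      _ = 0 := by rw [hdf, mul_zero']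
  have hright : f * a = 0 := by
    calc f * a = f * ((a⁻¹ * a) * a) := by rw [hnormal, mul_inv_mul]
      _ = 0 := by rw [← mul_assoc, ← hcomm.eq, hdf, zero_mul']
  rw [Commute, SemiconjBy, hleft, hright]

end CommutesBelow

section Meet

variable {S : Type u} [BooleanInverseMeetMonoid S]

theorem phi_nle_self (a : S) : nle (phi a) a :=
  BooleanInverseMeetMonoid.inf_le_left a 1

theorem isIdempotentElem_phi (a : S) : IsIdempotentElem (phi a) := by
  obtain ⟨g, hg, hphi⟩ := BooleanInverseMeetMonoid.inf_le_right a 1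
  rw [phi, binf, hphi, mul_one]
  exact hg

theorem commutesBelow_phi (a : S) : CommutesBelow a (phi a) :=
  (commutesBelow_self a).mono (phi_nle_self a)

end Meet

/-- Let `S` be a fundamental Boolean inverse ∧-monoid and `a ∈ S`.
(1) If `af = fa` for all idempotents `f ≤ \overline{φ(a)}` then `a` is an idempotent.
(2) If `a⁻¹a = aa⁻¹` and `af = fa` for all idempotents `f ≤ σ(a)` then `a` is an
idempotent. -/
theorem statement15 (S : Type u) [BooleanInverseMeetMonoid S]
    (hf : Fundamental S) (a : S) :
    ((∀ f : S, f * f = f → nle f (bcompl (phi a)) → a * f = f * a) → a * a = a) ∧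
    ((a⁻¹ * a = a * a⁻¹ ∧ ∀ f : S, f * f = f → nle f (sigma a) → a * f = f * a) →
      a * a = a) := by
  have hphi := isIdempotentElem_phi a
  have hd := isIdempotentElem_inv_mul a
  refine ⟨fun hcompl => ?_, fun ⟨hnormal, hsigma⟩ => ?_⟩
  · exact hf.mul_self_of_commutesBelow_one
      (commutesBelow_one_of_split hphi (commutesBelow_phi a) hcompl)
  · have hbelow_d : CommutesBelow a (a⁻¹ * a) :=
      commutesBelow_of_split hd hphi ((commutesBelow_phi a).mono (mul_nle_left hphi hd)) hsigma
    exact hf.mul_self_of_commutesBelow_one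
      (commutesBelow_one_of_split hd hbelow_d (commutesBelow_bcompl_inv_mul hnormal))
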